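/- arXiv:2408.04615 — 3 statements merged into one kernel-verified Lean document; each statement's English description precedes it below -/
import Mathlib

section
/- Let G = (V, E) be a strongly-connected digraph, Y a minimal removable set of V (i.e., Y nonempty, G − Y strongly connected or |V \ Y| = 1, and Y minimal with this property), and X = V \ Y. Then: (i) G[Y] contains a Hamiltonian path from a vertex receiving an edge from X to a vertex sending an edge to X; (ii) writing this path v_1 → ... → v_q, there is no edge (v_i, v_j) ∈ E with j − i ≥ 2; (iii) v_1 is the unique vertex of Y receiving edges from X and v_q is the unique vertex of Y sending edges to X. -/
variable {V : Type*}

/-- Reachability within `S` using edges of `E` whose both endpoints lie in `S`. -/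
def ReachIn (E : V → V → Prop) (S : Set V) : V → V → Prop :=
  Relation.ReflTransGen (fun a b => E a b ∧ a ∈ S ∧ b ∈ S)

/-- The induced subgraph `G[S]` is strongly connected. -/
def StrongConn (E : V → V → Prop) (S : Set V) : Prop :=
  ∀ u ∈ S, ∀ v ∈ S, ReachIn E S u v

/-- `Y` is a removable set of a strongly-connected digraph `G` on `V`:
`Y` is a nonempty proper subset of `V` and `G − Y` is strongly connected. -/
def IsRSg (G : V → V → Prop) (Y : Set V) : Prop :=
  Y.Nonempty ∧ Y ⊂ Set.univ ∧ StrongConn G (Set.univ \ Y)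

/-- `Y` is a minimal removable set of `G`. -/
def IsMinRSg (G : V → V → Prop) (Y : Set V) : Prop :=
  IsRSg G Y ∧ ∀ Z, IsRSg G Z → Z ⊆ Y → Z = Y

lemma reachIn_mono {E : V → V → Prop} {S T : Set V} (h : S ⊆ T) {a b : V}
    (hr : ReachIn E S a b) : ReachIn E T a b := by
  induction hr with
  | refl => exact Relation.ReflTransGen.refl
  | tail _ h2 ih => exact ih.tail ⟨h2.1, h h2.2.1, h h2.2.2⟩

lemma reachIn_chain {E : V → V → Prop} {S : Set V} (w : ℕ → V) (a b : ℕ) (hab : a ≤ b)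
    (h : ∀ k, a ≤ k → k < b → E (w k) (w (k+1)) ∧ w k ∈ S ∧ w (k+1) ∈ S) :
    ReachIn E S (w a) (w b) := by
  induction b, hab using Nat.le_induction with
  | base => exact Relation.ReflTransGen.refl
  | succ n hn ih =>
      exact (ih fun k hk hk' => h k hk (hk'.trans (Nat.lt_succ_self n))).tail
        (h n hn (Nat.lt_succ_self n))

lemma cross_point {R : V → V → Prop} {P : V → Prop} {a b : V}
    (h : Relation.ReflTransGen R a b) (ha : P a) :
    ¬ P b → ∃ u v, P u ∧ ¬ P v ∧ R u v := by
  induction h with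
  | refl => exact fun hb => absurd ha hb
  | @tail c d h1 h2 ih =>
    intro hd
    by_cases hc : P c
    · exact ⟨c, d, hc, hd, h2⟩
    · exact ih hc

def RIter (G : V → V → Prop) (X : Set V) : ℕ → V → Prop
  | 0, v => v ∈ X
  | (n+1), v => ∃ w, G v w ∧ RIter G X n w

lemma exists_rIter {G : V → V → Prop} {X : Set V} {a b : V}
    (h : Relation.ReflTransGen (fun a b => G a b ∧ a ∈ (Set.univ : Set V) ∧ b ∈ (Set.univ : Set V)) a b)
    (hb : b ∈ X) : ∃ n, RIter G X n a := by
  induction h using Relation.ReflTransGen.head_induction_on with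
  | refl => exact ⟨0, hb⟩
  | head h1 _ ih => obtain ⟨n, hn⟩ := ih; exact ⟨n+1, _, h1.1, hn⟩

lemma build_path {G : V → V → Prop} {X : Set V} (d : V → ℕ)
    (hstep : ∀ v, v ∉ X → ∃ u, G v u ∧ (u ∈ X ∨ (u ∉ X ∧ d u < d v))) :
    ∀ n (v : V), d v ≤ n → v ∉ X →
      ∃ (q : ℕ) (w : ℕ → V), 0 < q ∧ w 0 = v ∧ (∀ k, k < q → w k ∉ X) ∧
        (∀ k, k + 1 < q → G (w k) (w (k+1))) ∧
        (∀ k, k + 1 < q → d (w (k+1)) < d (w k)) ∧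
        (∃ x ∈ X, G (w (q-1)) x) := by
  intro n
  induction n with
  | zero =>
      intro v hv hvX
      obtain ⟨u, hGu, hu⟩ := hstep v hvX
      rcases hu with h | ⟨_, hdu⟩
      · exact ⟨1, fun _ => v, one_pos, rfl, fun k _ => hvX, fun k hk => by omega,
          fun k hk => by omega, ⟨u, h, hGu⟩⟩
      · omega
  | succ n ih =>
      intro v hv hvX
      obtain ⟨u, hGu, hu⟩ := hstep v hvX
      rcases hu with h | ⟨huX, hdu⟩
      · exact ⟨1, fun _ => v, one_pos, rfl, fun k _ => hvX, fun k hk => by omega,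
          fun k hk => by omega, ⟨u, h, hGu⟩⟩
      · obtain ⟨q, w, hq, hw0, hmem, hE, hdd, hexit⟩ := ih u (by omega) huX
        refine ⟨q+1, fun k => if k = 0 then v else w (k-1), by omega, by simp, ?_, ?_, ?_, ?_⟩
        · intro k hk
          by_cases h0 : k = 0
          · simpa [h0] using hvX
          · simpa [h0] using hmem (k-1) (by omega)
        · intro k hk
          by_cases h0 : k = 0
          · subst h0; simpa [hw0] using hGu
          · have : G (w (k-1)) (w (k-1+1)) := hE (k-1) (by omega)
            simpa [h0, show k - 1 + 1 = k by omega] using this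
        · intro k hk
          by_cases h0 : k = 0
          · subst h0; simpa [hw0] using hdu
          · have : d (w (k-1+1)) < d (w (k-1)) := hdd (k-1) (by omega)
            simpa [h0, show k - 1 + 1 = k by omega] using this
        · obtain ⟨x, hx, hGx⟩ := hexit
          refine ⟨x, hx, ?_⟩
          simpa [show q + 1 - 1 = q by omega, show q ≠ 0 by omega] using hGx

lemma strongConn_hub {G : V → V → Prop} {X S : Set V}
    (hX : ∀ u ∈ X, ∀ v ∈ X, ReachIn G X u v) (hXS : X ⊆ S)
    (h1 : ∀ v ∈ S, ∃ x ∈ X, ReachIn G S v x)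
    (h2 : ∀ v ∈ S, ∃ x ∈ X, ReachIn G S x v) :
    ∀ u ∈ S, ∀ v ∈ S, ReachIn G S u v := by
  intro u hu v hv
  obtain ⟨x1, hx1, hr1⟩ := h1 u hu
  obtain ⟨x2, hx2, hr2⟩ := h2 v hv
  exact Relation.ReflTransGen.trans hr1
    (Relation.ReflTransGen.trans (reachIn_mono hXS (hX x1 hx1 x2 hx2)) hr2)

theorem stmt_13 [Fintype V] (G : V → V → Prop) (hSC : StrongConn G Set.univ)
    (Y : Set V) (hY : IsMinRSg G Y) (X : Set V) (hX : X = Yᶜ) :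
    ∃ (q : ℕ) (hq : 0 < q) (p : Fin q → V),
      Function.Injective p ∧ Set.range p = Y ∧
      (∀ i : Fin q, ∀ h : i.1 + 1 < q, G (p i) (p ⟨i.1 + 1, h⟩)) ∧
      (∃ x ∈ X, G x (p ⟨0, hq⟩)) ∧
      (∃ x ∈ X, G (p ⟨q - 1, Nat.sub_lt hq Nat.one_pos⟩) x) ∧
      (∀ i j : Fin q, i.1 + 2 ≤ j.1 → ¬ G (p i) (p j)) ∧
      (∀ y ∈ Y, (∃ x ∈ X, G x y) → y = p ⟨0, hq⟩) ∧
      (∀ y ∈ Y, (∃ x ∈ X, G y x) → y = p ⟨q - 1, Nat.sub_lt hq Nat.one_pos⟩) := by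
  classical
  subst hX
  obtain ⟨⟨hYne, hYss, hXSC'⟩, hmin⟩ := hY
  have hXSC : ∀ u ∈ Yᶜ, ∀ v ∈ Yᶜ, ReachIn G Yᶜ u v := by
    have h : Set.univ \ Y = Yᶜ := by ext v; simp
    rw [h] at hXSC'; exact hXSC'
  have hXne : (Yᶜ : Set V).Nonempty := Set.nonempty_compl.mpr (Set.ssubset_univ_iff.mp hYss)
  -- Master lemma from minimality
  have master : ∀ S : Set V, Yᶜ ⊆ S → (∀ u ∈ S, ∀ v ∈ S, ReachIn G S u v) →
      Sᶜ.Nonempty → Sᶜ = Y := by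
    intro S hXS hSCS hne
    apply hmin
    · refine ⟨hne, ?_, ?_⟩
      · rw [Set.ssubset_univ_iff]
        intro h
        obtain ⟨x, hx⟩ := hXne
        have hx' : x ∈ Sᶜ := h ▸ Set.mem_univ x
        exact hx' (hXS hx)
      · have h : Set.univ \ Sᶜ = S := by ext v; simp
        rw [h]; exact hSCS
    · intro v hv
      by_contra hvY
      exact hv (hXS hvY)
  -- entry edge
  obtain ⟨y0, hy0⟩ := hYne
  obtain ⟨x', hx'⟩ := hXne
  obtain ⟨x0, v1, hx0X, hv1X, hR01⟩ :=
    cross_point (P := fun v => v ∈ Yᶜ) (hSC x' (Set.mem_univ x') y0 (Set.mem_univ y0)) hx'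
      (by simpa using hy0)
  have hG01 : G x0 v1 := hR01.1
  have hv1Y : v1 ∈ Y := by simpa using hv1X
  -- distance to X
  have hall : ∀ v : V, ∃ n, RIter G Yᶜ n v := fun v =>
    exists_rIter (hSC v (Set.mem_univ v) x' (Set.mem_univ x')) hx'
  set d : V → ℕ := fun v => Nat.find (hall v) with hd
  have hstep : ∀ v, v ∉ Yᶜ → ∃ u, G v u ∧ (u ∈ Yᶜ ∨ (u ∉ Yᶜ ∧ d u < d v)) := by
    intro v hvX
    have hspec : RIter G Yᶜ (d v) v := Nat.find_spec (hall v)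
    cases h' : d v with
    | zero =>
        exfalso
        rw [h'] at hspec
        simp only [RIter] at hspec
        exact hvX hspec
    | succ m =>
        rw [h'] at hspec
        simp only [RIter] at hspec
        obtain ⟨u, hGu, hRu⟩ := hspec
        have hdu : d u ≤ m := Nat.find_le hRu
        by_cases huX : u ∈ Yᶜ
        · exact ⟨u, hGu, Or.inl huX⟩
        · exact ⟨u, hGu, Or.inr ⟨huX, by omega⟩⟩
  obtain ⟨q, w, hq, hw0, hmemX, hE, hdd, hexit⟩ := build_path d hstep (d v1) v1 le_rfl hv1X
  have hwY : ∀ k, k < q → w k ∈ Y := fun k hk => by simpa using hmemX k hk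
  have hmono : ∀ i j, i < j → j < q → d (w j) < d (w i) := by
    intro i j hij hj
    induction j, hij using Nat.le_induction with
    | base => exact hdd i hj
    | succ n hn ih => exact (hdd n hj).trans (ih (by omega))
  have hinj : ∀ i j, i < q → j < q → w i = w j → i = j := by
    intro i j hi hj hw
    by_contra hne
    rcases Nat.lt_or_ge i j with h | h
    · have := hmono i j h hj; rw [hw] at this; omega
    · have hji : j < i := by omega
      have := hmono j i hji hi; rw [hw] at this; omega
  have hseg : ∀ (S : Set V) (a b : ℕ), a ≤ b → b < q →
      (∀ m, a ≤ m → m ≤ b → w m ∈ S) → ReachIn G S (w a) (w b) := by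
    intro S a b hab hb hm
    exact reachIn_chain w a b hab fun k hk hk' =>
      ⟨hE k (by omega), hm k hk (by omega), hm (k+1) (by omega) (by omega)⟩
  obtain ⟨xq, hxq, hGxq⟩ := hexit
  have hG0w : G x0 (w 0) := by rw [hw0]; exact hG01
  -- the path covers all of Y
  have hYeq : ∀ y ∈ Y, ∃ k, k < q ∧ w k = y := by
    intro y hy
    have hmemS : ∀ k, k < q → w k ∈ Yᶜ ∪ {v | ∃ k, k < q ∧ w k = v} :=
      fun k hk => Or.inr ⟨k, hk, rfl⟩
    have hSCS : ∀ u ∈ Yᶜ ∪ {v | ∃ k, k < q ∧ w k = v},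
        ∀ v ∈ Yᶜ ∪ {v | ∃ k, k < q ∧ w k = v},
        ReachIn G (Yᶜ ∪ {v | ∃ k, k < q ∧ w k = v}) u v := by
      apply strongConn_hub hXSC Set.subset_union_left
      · rintro v (hv | ⟨k, hk, rfl⟩)
        · exact ⟨v, hv, Relation.ReflTransGen.refl⟩
        · exact ⟨xq, hxq, Relation.ReflTransGen.tail
            (hseg _ k (q-1) (by omega) (by omega) (fun m hm hm' => hmemS m (by omega)))
            ⟨hGxq, hmemS (q-1) (by omega), Or.inl hxq⟩⟩
      · rintro v (hv | ⟨k, hk, rfl⟩)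
        · exact ⟨v, hv, Relation.ReflTransGen.refl⟩
        · exact ⟨x0, hx0X, Relation.ReflTransGen.head ⟨hG0w, Or.inl hx0X, hmemS 0 hq⟩
            (hseg _ 0 k (by omega) hk (fun m hm hm' => hmemS m (by omega)))⟩
    by_cases hcne : (Yᶜ ∪ {v | ∃ k, k < q ∧ w k = v})ᶜ.Nonempty
    · exfalso
      have hceq := master _ Set.subset_union_left hSCS hcne
      have h0 : w 0 ∈ Y := hwY 0 hq
      rw [← hceq] at h0
      exact h0 (hmemS 0 hq)
    · have hSuniv : (Yᶜ ∪ {v | ∃ k, k < q ∧ w k = v}) = Set.univ :=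
        Set.compl_empty_iff.mp (Set.not_nonempty_iff_eq_empty.mp hcne)
      have hyS : y ∈ Yᶜ ∪ {v | ∃ k, k < q ∧ w k = v} := hSuniv ▸ Set.mem_univ y
      rcases hyS with h | h
      · exact absurd hy h
      · exact h
  refine ⟨q, hq, fun i => w i.1, ?_, ?_, ?_, ⟨x0, hx0X, hG0w⟩, ⟨xq, hxq, hGxq⟩, ?_, ?_, ?_⟩
  · intro i j h
    exact Fin.ext (hinj i.1 j.1 i.2 j.2 h)
  · ext y
    constructor
    · rintro ⟨i, rfl⟩; exact hwY i.1 i.2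
    · intro hy; obtain ⟨k, hk, hwk⟩ := hYeq y hy; exact ⟨⟨k, hk⟩, hwk⟩
  · intro i h; exact hE i.1 h
  -- no forward chords
  · rintro i j hij hGij
    have hi := i.2; have hj := j.2
    have hmemS : ∀ k, k < q → (k ≤ i.1 ∨ j.1 ≤ k) →
        w k ∈ Yᶜ ∪ {v | ∃ k, k < q ∧ (k ≤ i.1 ∨ j.1 ≤ k) ∧ w k = v} :=
      fun k hk hc => Or.inr ⟨k, hk, hc, rfl⟩
    have hSCS : ∀ u ∈ Yᶜ ∪ {v | ∃ k, k < q ∧ (k ≤ i.1 ∨ j.1 ≤ k) ∧ w k = v},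
        ∀ v ∈ Yᶜ ∪ {v | ∃ k, k < q ∧ (k ≤ i.1 ∨ j.1 ≤ k) ∧ w k = v},
        ReachIn G (Yᶜ ∪ {v | ∃ k, k < q ∧ (k ≤ i.1 ∨ j.1 ≤ k) ∧ w k = v}) u v := by
      apply strongConn_hub hXSC Set.subset_union_left
      · rintro v (hv | ⟨k, hk, hc, rfl⟩)
        · exact ⟨v, hv, Relation.ReflTransGen.refl⟩
        · refine ⟨xq, hxq, Relation.ReflTransGen.tail ?_
            ⟨hGxq, hmemS (q-1) (by omega) (by omega), Or.inl hxq⟩⟩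
          rcases hc with hc | hc
          · refine Relation.ReflTransGen.trans
              (hseg _ k i.1 hc hi (fun m hm hm' => hmemS m (by omega) (by omega))) ?_
            refine Relation.ReflTransGen.head
              ⟨hGij, hmemS i.1 hi (by omega), hmemS j.1 hj (by omega)⟩ ?_
            exact hseg _ j.1 (q-1) (by omega) (by omega)
              (fun m hm hm' => hmemS m (by omega) (by omega))
          · exact hseg _ k (q-1) (by omega) (by omega)
              (fun m hm hm' => hmemS m (by omega) (by omega))
      · rintro v (hv | ⟨k, hk, hc, rfl⟩)
        · exact ⟨v, hv, Relation.ReflTransGen.refl⟩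
        · refine ⟨x0, hx0X, Relation.ReflTransGen.head
            ⟨hG0w, Or.inl hx0X, hmemS 0 hq (by omega)⟩ ?_⟩
          rcases hc with hc | hc
          · exact hseg _ 0 k (by omega) hk (fun m hm hm' => hmemS m (by omega) (by omega))
          · refine Relation.ReflTransGen.trans
              (hseg _ 0 i.1 (by omega) hi (fun m hm hm' => hmemS m (by omega) (by omega))) ?_
            refine Relation.ReflTransGen.head
              ⟨hGij, hmemS i.1 hi (by omega), hmemS j.1 hj (by omega)⟩ ?_
            exact hseg _ j.1 k hc hk (fun m hm hm' => hmemS m (by omega) (by omega))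
    have hnot : w (i.1+1) ∉ Yᶜ ∪ {v | ∃ k, k < q ∧ (k ≤ i.1 ∨ j.1 ≤ k) ∧ w k = v} := by
      rintro (hv | ⟨k, hk, hc, hwk⟩)
      · exact hv (hwY (i.1+1) (by omega))
      · have := hinj k (i.1+1) hk (by omega) hwk
        omega
    have hceq := master _ Set.subset_union_left hSCS ⟨w (i.1+1), hnot⟩
    have h0 : w 0 ∈ Y := hwY 0 hq
    rw [← hceq] at h0
    exact h0 (hmemS 0 hq (by omega))
  -- unique entry
  · rintro y hy ⟨x, hx, hGxy⟩
    obtain ⟨k, hk, rfl⟩ := hYeq y hy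
    show w k = w 0
    by_contra hne
    have hk0 : k ≠ 0 := fun h => hne (by rw [h])
    have hmemS : ∀ m, k ≤ m → m < q →
        w m ∈ Yᶜ ∪ {v | ∃ m, m < q ∧ k ≤ m ∧ w m = v} :=
      fun m hm hmq => Or.inr ⟨m, hmq, hm, rfl⟩
    have hSCS : ∀ u ∈ Yᶜ ∪ {v | ∃ m, m < q ∧ k ≤ m ∧ w m = v},
        ∀ v ∈ Yᶜ ∪ {v | ∃ m, m < q ∧ k ≤ m ∧ w m = v},
        ReachIn G (Yᶜ ∪ {v | ∃ m, m < q ∧ k ≤ m ∧ w m = v}) u v := by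
      apply strongConn_hub hXSC Set.subset_union_left
      · rintro v (hv | ⟨m, hmq, hm, rfl⟩)
        · exact ⟨v, hv, Relation.ReflTransGen.refl⟩
        · exact ⟨xq, hxq, Relation.ReflTransGen.tail
            (hseg _ m (q-1) (by omega) (by omega) (fun l hl hl' => hmemS l (by omega) (by omega)))
            ⟨hGxq, hmemS (q-1) (by omega) (by omega), Or.inl hxq⟩⟩
      · rintro v (hv | ⟨m, hmq, hm, rfl⟩)
        · exact ⟨v, hv, Relation.ReflTransGen.refl⟩
        · exact ⟨x, hx, Relation.ReflTransGen.head
            ⟨hGxy, Or.inl hx, hmemS k le_rfl hk⟩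
            (hseg _ k m hm hmq (fun l hl hl' => hmemS l (by omega) (by omega)))⟩
    have hnot : w 0 ∉ Yᶜ ∪ {v | ∃ m, m < q ∧ k ≤ m ∧ w m = v} := by
      rintro (hv | ⟨m, hmq, hm, hwm⟩)
      · exact hv (hwY 0 hq)
      · have := hinj m 0 hmq hq hwm
        omega
    have hceq := master _ Set.subset_union_left hSCS ⟨w 0, hnot⟩
    have h0 : w k ∈ Y := hwY k hk
    rw [← hceq] at h0
    exact h0 (hmemS k le_rfl hk)
  -- unique exit
  · rintro y hy ⟨x, hx, hGyx⟩
    obtain ⟨k, hk, rfl⟩ := hYeq y hy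
    show w k = w (q-1)
    by_contra hne
    have hk1 : k < q - 1 := by
      rcases Nat.lt_or_ge k (q-1) with h | h
      · exact h
      · exact absurd (by rw [show k = q - 1 by omega]) hne
    have hmemS : ∀ m, m ≤ k →
        w m ∈ Yᶜ ∪ {v | ∃ m, m ≤ k ∧ w m = v} :=
      fun m hm => Or.inr ⟨m, hm, rfl⟩
    have hSCS : ∀ u ∈ Yᶜ ∪ {v | ∃ m, m ≤ k ∧ w m = v},
        ∀ v ∈ Yᶜ ∪ {v | ∃ m, m ≤ k ∧ w m = v},
        ReachIn G (Yᶜ ∪ {v | ∃ m, m ≤ k ∧ w m = v}) u v := by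
      apply strongConn_hub hXSC Set.subset_union_left
      · rintro v (hv | ⟨m, hm, rfl⟩)
        · exact ⟨v, hv, Relation.ReflTransGen.refl⟩
        · exact ⟨x, hx, Relation.ReflTransGen.tail
            (hseg _ m k hm hk (fun l hl hl' => hmemS l (by omega)))
            ⟨hGyx, hmemS k le_rfl, Or.inl hx⟩⟩
      · rintro v (hv | ⟨m, hm, rfl⟩)
        · exact ⟨v, hv, Relation.ReflTransGen.refl⟩
        · exact ⟨x0, hx0X, Relation.ReflTransGen.head
            ⟨hG0w, Or.inl hx0X, hmemS 0 (by omega)⟩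
            (hseg _ 0 m (by omega) (by omega) (fun l hl hl' => hmemS l (by omega)))⟩
    have hnot : w (q-1) ∉ Yᶜ ∪ {v | ∃ m, m ≤ k ∧ w m = v} := by
      rintro (hv | ⟨m, hm, hwm⟩)
      · exact hv (hwY (q-1) (by omega))
      · have := hinj m (q-1) (by omega) (by omega) hwm
        omega
    have hceq := master _ Set.subset_union_left hSCS ⟨w (q-1), hnot⟩
    have h0 : w 0 ∈ Y := hwY 0 hq
    rw [← hceq] at h0
    exact h0 (hmemS 0 (by omega))
end

section
/- Let G = (V, E) be a strongly-connected digraph with |V| ≥ 2 that is MaxPSS-disjoint, and let H be the quotient digraph on the set of MaxPSSs of V (with an arc (X, X') whenever X ≠ X' and some edge of G goes from X to X'). Then for q = number of MaxPSSs, H contains no simple cycle of length ℓ with 2 ≤ ℓ < q, and H contains a Hamiltonian cycle. -/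
variable {V : Type*}

/-- `X` is a MaxPSS of `V` in the strongly-connected system of `G`:
a maximal nonempty proper subset of `V` inducing a strongly-connected subgraph. -/
def IsMaxPSSg (G : V → V → Prop) (X : Set V) : Prop :=
  X.Nonempty ∧ X ⊂ Set.univ ∧ StrongConn G X ∧
    ∀ Z : Set V, Z.Nonempty → Z ⊂ Set.univ → StrongConn G Z → X ⊆ Z → Z = X

/-- `G` is MaxPSS-disjoint. -/
def MaxPSSDisjG (G : V → V → Prop) : Prop :=
  ∀ X X', IsMaxPSSg G X → IsMaxPSSg G X' → X ≠ X' → X ∩ X' = ∅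

/-- Arc of the quotient digraph `H_G` between two distinct vertex subsets. -/
def QArc (G : V → V → Prop) (A B : Set V) : Prop :=
  A ≠ B ∧ ∃ u ∈ A, ∃ v ∈ B, G u v

/-!
The union of the MaxPSSs along a cycle of `H` induces a strongly connected subgraph that strictly
contains each of them (the cycle has length at least 2 and they are disjoint), so by maximality it
is all of `V`, and by disjointness the cycle passes through every MaxPSS.

Such a cycle exists: every MaxPSS `X` has an out-arc in `H`, because a path of `G` from `X` to a
vertex outside `X` leaves `X` along some edge. Choosing one out-neighbour for each MaxPSS gives a
self-map of a finite set, and any periodic orbit of it is a cycle of `H`.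
-/

open Function Relation

theorem Function.nonempty_periodicPts {α : Type*} [Finite α] [Nonempty α] (f : α → α) :
    (periodicPts f).Nonempty := by
  obtain ⟨x⟩ := ‹Nonempty α›
  obtain ⟨m, n, hmn, hx⟩ := Finite.exists_ne_map_eq_of_infinite fun n : ℕ => f^[n] x
  wlog hlt : m < n generalizing m n
  · exact this n m hmn.symm hx.symm (by omega)
  refine ⟨f^[m] x, mk_mem_periodicPts (Nat.sub_pos_of_lt hlt) ?_⟩
  change f^[n - m] (f^[m] x) = f^[m] x
  rw [← iterate_add_apply, Nat.sub_add_cancel hlt.le]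
  exact hx.symm

theorem exists_zmod_cycle_of_forall_exists_rel {α : Type*} [Finite α] [Nonempty α]
    {r : α → α → Prop} (hirr : ∀ a, ¬ r a a) (hout : ∀ a, ∃ b, r a b) :
    ∃ ℓ, 2 ≤ ℓ ∧ ∃ c : ZMod ℓ → α, Injective c ∧ ∀ i, r (c i) (c (i + 1)) := by
  choose s hs using hout
  obtain ⟨x, hx⟩ := nonempty_periodicPts s
  set ℓ := minimalPeriod s x
  have hℓ : 2 ≤ ℓ := by
    have hpos : 0 < ℓ := minimalPeriod_pos_of_mem_periodicPts hx
    have hne_one : ℓ ≠ 1 := fun h => hirr x (by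
      simpa [(minimalPeriod_eq_one_iff_isFixedPt.mp h).eq] using hs x)
    omega
  have : Fact (1 < ℓ) := ⟨hℓ⟩
  refine ⟨ℓ, hℓ, fun i => s^[i.val] x, fun i j hij => ?_, fun i => ?_⟩
  · exact ZMod.val_injective ℓ
      (iterate_injOn_Iio_minimalPeriod (ZMod.val_lt i) (ZMod.val_lt j) hij)
  · change r (s^[i.val] x) (s^[(i + 1).val] x)
    rw [ZMod.val_add, ZMod.val_one, iterate_mod_minimalPeriod_eq, iterate_succ_apply']
    exact hs _

section Digraph

variable {E : V → V → Prop}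

theorem ReachIn.mono {S T : Set V} (hST : S ⊆ T) {u v : V} (huv : ReachIn E S u v) :
    ReachIn E T u v :=
  ReflTransGen.mono (fun _ _ hab => ⟨hab.1, hST hab.2.1, hST hab.2.2⟩) _ _ huv

theorem ReachIn.exists_edge_of_mem_of_notMem {S X : Set V} {u v : V} (huv : ReachIn E S u v)
    (hu : u ∈ X) (hv : v ∉ X) : ∃ a ∈ X, ∃ b ∉ X, E a b := by
  induction huv with
  | refl => exact absurd hu hv
  | @tail b c _ hbc ih =>
    by_cases hb : b ∈ X
    · exact ⟨b, hb, c, hv, hbc.1⟩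
    · exact ih hb

theorem strongConn_singleton (E : V → V → Prop) (v : V) : StrongConn E {v} := by
  rintro a rfl b rfl
  exact ReflTransGen.refl

theorem StrongConn.reachIn_of_edge {S A B : Set V} (hA : StrongConn E A) (hB : StrongConn E B)
    (hAS : A ⊆ S) (hBS : B ⊆ S) {a b : V} (ha : a ∈ A) (hb : b ∈ B) (hab : E a b)
    {u v : V} (hu : u ∈ A) (hv : v ∈ B) : ReachIn E S u v :=
  ((hA u hu a ha).mono hAS).trans
    (ReflTransGen.head ⟨hab, hAS ha, hBS hb⟩ ((hB b hb v hv).mono hBS))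

theorem strongConn_iUnion_of_cycle {ℓ : ℕ} [NeZero ℓ] {c : ZMod ℓ → Set V}
    (hconn : ∀ i, StrongConn E (c i)) (hne : ∀ i, (c i).Nonempty)
    (hedge : ∀ i, ∃ a ∈ c i, ∃ b ∈ c (i + 1), E a b) : StrongConn E (⋃ i, c i) := by
  have hsub := Set.subset_iUnion c
  have hreach : ∀ i (n : ℕ), ∀ u ∈ c i, ∀ v ∈ c (i + n), ReachIn E (⋃ i, c i) u v := by
    intro i n u hu
    induction n with
    | zero => simpa using fun v hv => (hconn i u hu v hv).mono (hsub i)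
    | succ n ih =>
      intro v hv
      rw [Nat.cast_succ, ← add_assoc] at hv
      obtain ⟨w, hw⟩ := hne (i + n)
      obtain ⟨a, ha, b, hb, hab⟩ := hedge (i + n)
      exact (ih w hw).trans
        ((hconn _).reachIn_of_edge (hconn _) (hsub _) (hsub _) ha hb hab hw hv)
  intro u hu v hv
  obtain ⟨i, hui⟩ := Set.mem_iUnion.mp hu
  obtain ⟨j, hvj⟩ := Set.mem_iUnion.mp hv
  exact hreach i (j - i).val u hui v (by rwa [ZMod.natCast_zmod_val, add_sub_cancel])

end Digraph

section MaxPSS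

variable {G : V → V → Prop}

theorem MaxPSSDisjG.eq_of_mem (hdisj : MaxPSSDisjG G) {X Y : Set V} (hX : IsMaxPSSg G X)
    (hY : IsMaxPSSg G Y) {v : V} (hvX : v ∈ X) (hvY : v ∈ Y) : X = Y := by
  by_contra hXY
  exact Set.notMem_empty v (hdisj X Y hX hY hXY ▸ ⟨hvX, hvY⟩)

theorem MaxPSSDisjG.mem_range_of_cycle (hdisj : MaxPSSDisjG G) {ℓ : ℕ} (hℓ : 2 ≤ ℓ)
    {c : ZMod ℓ → Set V} (hinj : Injective c) (hmax : ∀ i, IsMaxPSSg G (c i))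
    (harc : ∀ i, QArc G (c i) (c (i + 1))) {X : Set V} (hX : IsMaxPSSg G X) :
    X ∈ Set.range c := by
  have : Fact (1 < ℓ) := ⟨hℓ⟩
  have hsub := Set.subset_iUnion c
  have hconn : StrongConn G (⋃ i, c i) :=
    strongConn_iUnion_of_cycle (fun i => (hmax i).2.2.1) (fun i => (hmax i).1) fun i => (harc i).2
  have huniv : ⋃ i, c i = Set.univ := by
    by_contra hne
    have hc0 : ⋃ i, c i = c 0 := (hmax 0).2.2.2 _ ((hmax 0).1.mono (hsub 0))
      (Set.ssubset_univ_iff.mpr hne) hconn (hsub 0)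
    obtain ⟨x, hx⟩ := (hmax 1).1
    have hc1 : c 1 = c 0 := hdisj.eq_of_mem (hmax 1) (hmax 0) hx (hc0 ▸ hsub 1 hx)
    exact zero_ne_one (hinj hc1).symm
  obtain ⟨x, hx⟩ := hX.1
  obtain ⟨i, hxi⟩ := Set.mem_iUnion.mp (huniv ▸ Set.mem_univ x)
  exact ⟨i, hdisj.eq_of_mem (hmax i) hX hxi hx⟩

variable [Finite V] [Nontrivial V]

theorem exists_isMaxPSSg_mem (G : V → V → Prop) (v : V) : ∃ X, IsMaxPSSg G X ∧ v ∈ X := by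
  obtain ⟨X, hvX, hXmax⟩ := Finite.exists_le_maximal
    (p := fun Z : Set V => Z.Nonempty ∧ Z ⊂ Set.univ ∧ StrongConn G Z)
    ⟨Set.singleton_nonempty v, Set.singleton_ssubset_univ v, strongConn_singleton G v⟩
  refine ⟨X, ⟨hXmax.1.1, hXmax.1.2.1, hXmax.1.2.2, fun Z hZ hZu hZc hXZ => ?_⟩, hvX rfl⟩
  exact (hXmax.2 ⟨hZ, hZu, hZc⟩ hXZ).antisymm hXZ

theorem IsMaxPSSg.exists_qArc (hSC : StrongConn G Set.univ) {X : Set V} (hX : IsMaxPSSg G X) :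
    ∃ Y, IsMaxPSSg G Y ∧ QArc G X Y := by
  obtain ⟨x, hx⟩ := hX.1
  obtain ⟨y, -, hy⟩ := Set.exists_of_ssubset hX.2.1
  obtain ⟨a, ha, b, hb, hab⟩ :=
    (hSC x (Set.mem_univ x) y (Set.mem_univ y)).exists_edge_of_mem_of_notMem hx hy
  obtain ⟨Y, hY, hbY⟩ := exists_isMaxPSSg_mem G b
  exact ⟨Y, hY, fun h => hb (h ▸ hbY), a, ha, b, hbY, hab⟩

theorem exists_cycle_isMaxPSSg (hSC : StrongConn G Set.univ) :
    ∃ ℓ, 2 ≤ ℓ ∧ ∃ c : ZMod ℓ → Set V, Injective c ∧ (∀ i, IsMaxPSSg G (c i)) ∧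
      ∀ i, QArc G (c i) (c (i + 1)) := by
  obtain ⟨X, hX, -⟩ := exists_isMaxPSSg_mem G (Classical.arbitrary V)
  have : Nonempty {X // IsMaxPSSg G X} := ⟨⟨X, hX⟩⟩
  obtain ⟨ℓ, hℓ, c, hinj, harc⟩ :=
    exists_zmod_cycle_of_forall_exists_rel (r := fun X Y : {X // IsMaxPSSg G X} => QArc G X Y)
      (fun _ h => h.1 rfl) fun X =>
        let ⟨Y, hY, hXY⟩ := X.2.exists_qArc hSC
        ⟨⟨Y, hY⟩, hXY⟩
  exact ⟨ℓ, hℓ, fun i => c i, Subtype.val_injective.comp hinj, fun i => (c i).2, harc⟩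

end MaxPSS

theorem stmt_15 [Fintype V] (G : V → V → Prop)
    (hcard : 2 ≤ Fintype.card V) (hSC : StrongConn G Set.univ)
    (hdisj : MaxPSSDisjG G) :
    ((∀ ℓ : ℕ, 2 ≤ ℓ → ∀ c : ZMod ℓ → Set V, Function.Injective c →
        (∀ i, IsMaxPSSg G (c i)) → (∀ i, QArc G (c i) (c (i + 1))) →
        ∀ X, IsMaxPSSg G X → ∃ i, c i = X) ∧
      (∃ (ℓ : ℕ) (c : ZMod ℓ → Set V), 0 < ℓ ∧ Function.Injective c ∧
        (∀ X, IsMaxPSSg G X ↔ ∃ i, c i = X) ∧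
        ∀ i, QArc G (c i) (c (i + 1)))) := by
  have : Nontrivial V := Fintype.one_lt_card_iff_nontrivial.mp hcard
  obtain ⟨ℓ, hℓ, c, hinj, hmax, harc⟩ := exists_cycle_isMaxPSSg hSC
  refine ⟨fun _ hℓ' _ hinj' hmax' harc' _ hX => hdisj.mem_range_of_cycle hℓ' hinj' hmax' harc' hX,
    ℓ, c, by omega, hinj, fun X => ⟨hdisj.mem_range_of_cycle hℓ hinj hmax harc, ?_⟩, harc⟩
  rintro ⟨i, rfl⟩
  exact hmax i
end

section
/- Let G = (V, E) be a strongly-connected MaxPSS-disjoint digraph with |V| ≥ 3. Then there exists a non-edge e' ∈ (V × V) \ E (with distinct endpoints) such that G + e' is MinRS-disjoint. -/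
variable {V : Type*}

/-- `G` is MinRS-disjoint. -/
def MinRSDisjG (G : V → V → Prop) : Prop :=
  ∀ Y Y', IsMinRSg G Y → IsMinRSg G Y' → Y ≠ Y' → Y ∩ Y' = ∅

/-!
Let `X` be a MaxPSS. An arc `u → q` leaving `X`, followed by a path from `q` back into `X`
whose first step `q → b` is its last visit to `q`, sweeps out an ear which together with `X` is
strongly connected; by maximality it covers `V`. Short-cutting `u → q → b` by a new arc `u → b`
therefore keeps `V \ {q}` strongly connected. Once some `V \ {c}` is strongly connected, at most
one MaxPSS avoids `c`, so two distinct MaxPSSs either share `c` or cover `V`; either way their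
complements, the MinRSs, are disjoint. If `u → b` is not a new arc, any non-arc will do, and
MaxPSS-disjointness provides one: in a complete digraph on at least three vertices the sets
`V \ {v}` are overlapping MaxPSSs.
-/

open Set Relation

def addArc (G : V → V → Prop) (a b : V) : V → V → Prop :=
  fun x y => G x y ∨ (x = a ∧ y = b)

section Reach

variable {E E' : V → V → Prop} {S T : Set V} {a c : V}

lemma ReachIn.lift (h : ∀ x ∈ S, ∀ y ∈ S, E x y → ReachIn E' T x y)
    (hac : ReachIn E S a c) : ReachIn E' T a c :=
  reflTransGen_closed (fun x y hxy => h x hxy.2.1 y hxy.2.2 hxy.1) a c hac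

lemma ReachIn.mono_set (hST : S ⊆ T) (hac : ReachIn E S a c) : ReachIn E T a c :=
  ReflTransGen.mono (fun _ _ h => ⟨h.1, hST h.2.1, hST h.2.2⟩) _ _ hac

lemma ReachIn.mono_rel (hE : ∀ x y, E x y → E' x y) (hac : ReachIn E S a c) :
    ReachIn E' S a c :=
  ReflTransGen.mono (fun x y h => ⟨hE x y h.1, h.2⟩) _ _ hac

lemma ReachIn.mem_of_mem_right (hac : ReachIn E S a c) (hc : c ∈ S) : a ∈ S := by
  rcases hac.cases_head with rfl | ⟨_, hstep, _⟩
  exacts [hc, hstep.2.1]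

lemma ReachIn.interval (hac : ReachIn E S a c) :
    ReachIn E {z | ReachIn E S a z ∧ ReachIn E S z c} a c := by
  induction hac with
  | refl => exact .refl
  | @tail b c hab hbc ih =>
    have hsub : {z | ReachIn E S a z ∧ ReachIn E S z b} ⊆
        {z | ReachIn E S a z ∧ ReachIn E S z c} := fun z hz => ⟨hz.1, hz.2.tail hbc⟩
    exact (ih.mono_set hsub).tail ⟨hbc.1, ⟨hab, .single hbc⟩, ⟨hab.tail hbc, .refl⟩⟩

lemma reachIn_interval_of_mem {z : V} (hz : z ∈ {z | ReachIn E S a z ∧ ReachIn E S z c}) :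
    ReachIn E {z | ReachIn E S a z ∧ ReachIn E S z c} a z ∧
      ReachIn E {z | ReachIn E S a z ∧ ReachIn E S z c} z c :=
  ⟨hz.1.interval.mono_set fun _ hw => ⟨hw.1, hw.2.trans hz.2⟩,
    hz.2.interval.mono_set fun _ hw => ⟨hz.1.trans hw.1, hw.2⟩⟩

lemma Relation.ReflTransGen.exists_last_exit {X : Set V} (hac : ReflTransGen E a c)
    (ha : a ∈ X) (hc : c ∉ X) : ∃ u ∈ X, ∃ q ∉ X, E u q ∧ ReachIn E Xᶜ q c := by
  induction hac with
  | refl => exact absurd ha hc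
  | @tail b c _ hbc ih =>
    by_cases hb : b ∈ X
    · exact ⟨b, hb, c, hc, hbc, .refl⟩
    · obtain ⟨u, hu, q, hq, huq, hqb⟩ := ih hb
      exact ⟨u, hu, q, hq, huq, hqb.tail ⟨hbc, hb, hc⟩⟩

end Reach

section StrongConn

variable {E E' : V → V → Prop} {S T : Set V}

lemma StrongConn.mono_rel (hE : ∀ x y, E x y → E' x y) (hS : StrongConn E S) :
    StrongConn E' S :=
  fun s hs t ht => (hS s hs t ht).mono_rel hE

lemma strongConn_of_hub {x : V} (hto : ∀ s ∈ S, ReachIn E S s x)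
    (hfrom : ∀ t ∈ S, ReachIn E S x t) : StrongConn E S :=
  fun s hs t ht => (hto s hs).trans (hfrom t ht)

lemma StrongConn.union (hS : StrongConn E S) (hT : StrongConn E T) (hST : (S ∩ T).Nonempty) :
    StrongConn E (S ∪ T) := by
  obtain ⟨x, hxS, hxT⟩ := hST
  refine strongConn_of_hub (x := x) ?_ ?_
  · rintro s (hs | hs)
    exacts [(hS s hs x hxS).mono_set subset_union_left,
      (hT s hs x hxT).mono_set subset_union_right]
  · rintro t (ht | ht)
    exacts [(hS x hxS t ht).mono_set subset_union_left,
      (hT x hxT t ht).mono_set subset_union_right]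

lemma strongConn_insert {q u b : V} (hS : ∀ s ∈ S, ∀ t ∈ S, ReachIn E (insert q S) s t)
    (hu : u ∈ S) (hb : b ∈ S) (huq : E u q) (hqb : E q b) : StrongConn E (insert q S) := by
  have hin : ReachIn E (insert q S) u q := .single ⟨huq, mem_insert_of_mem q hu, mem_insert q S⟩
  have hout : ReachIn E (insert q S) q b := .single ⟨hqb, mem_insert q S, mem_insert_of_mem q hb⟩
  rintro s (rfl | hs) t (rfl | ht)
  · exact .refl
  · exact hout.trans (hS b hb t ht)
  · exact (hS s hs u hu).trans hin
  · exact hS s hs t ht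

lemma StrongConn.union_ear {X J : Set V} {x u b : V} (hX : StrongConn E X) (hx : x ∈ X)
    (hu : u ∈ X) (hub : E u b) (hbx : ReachIn E J b x) :
    StrongConn E (X ∪ {z | ReachIn E J b z ∧ ReachIn E J z x}) := by
  set I := {z | ReachIn E J b z ∧ ReachIn E J z x}
  refine strongConn_of_hub (x := x) ?_ ?_
  · rintro s (hs | hs)
    exacts [(hX s hs x hx).mono_set subset_union_left,
      (reachIn_interval_of_mem hs).2.mono_set subset_union_right]
  · rintro t (ht | ht)
    · exact (hX x hx t ht).mono_set subset_union_left
    · have hb : b ∈ X ∪ I := Or.inr ⟨.refl, hbx⟩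
      exact ((hX x hx u hu).mono_set subset_union_left).tail ⟨hub, Or.inl hu, hb⟩ |>.trans
        ((reachIn_interval_of_mem ht).1.mono_set subset_union_right)

lemma StrongConn.of_addArc {a b : V} (hS : StrongConn (addArc E a b) S) (hab : a = b ∨ E a b) :
    StrongConn E S := by
  refine fun s hs t ht => (hS s hs t ht).lift fun x hx y hy hxy => ?_
  rcases hxy with hxy | ⟨rfl, rfl⟩
  · exact .single ⟨hxy, hx, hy⟩
  · rcases hab with rfl | hab
    exacts [.refl, .single ⟨hab, hx, hy⟩]

end StrongConn

section MaxPSS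

variable {G : V → V → Prop} {X X' : Set V}

lemma exists_isMaxPSSg [Finite V] [Nontrivial V] (G : V → V → Prop) : ∃ X, IsMaxPSSg G X := by
  obtain ⟨v⟩ := ‹Nontrivial V›.to_nonempty
  have hv : {v} ∈ {Z : Set V | Z.Nonempty ∧ Z ⊂ univ ∧ StrongConn G Z} := by
    refine ⟨singleton_nonempty v, ssubset_univ_iff.2 (singleton_ne_univ v), ?_⟩
    rintro _ rfl _ rfl
    exact .refl
  obtain ⟨X, -, hXmax⟩ := (toFinite _).exists_le_maximal hv
  exact ⟨X, hXmax.1.1, hXmax.1.2.1, hXmax.1.2.2,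
    fun Z hZ hZu hZsc hXZ => (hXmax.2 ⟨hZ, hZu, hZsc⟩ hXZ).antisymm hXZ⟩

lemma IsMaxPSSg.union_eq_univ (hX : IsMaxPSSg G X) (hX' : IsMaxPSSg G X') (hne : X ≠ X')
    (hXX' : (X ∩ X').Nonempty) : X ∪ X' = univ := by
  by_contra hU
  have hsc := hX.2.2.1.union hX'.2.2.1 hXX'
  have hU' : X ∪ X' ⊂ univ := ssubset_univ_iff.2 hU
  have hnU : (X ∪ X').Nonempty := hX.1.mono subset_union_left
  exact hne ((hX.2.2.2 _ hnU hU' hsc subset_union_left).symm.trans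
    (hX'.2.2.2 _ hnU hU' hsc subset_union_right))

lemma isMaxPSSg_compl_singleton [Nontrivial V] {c : V} (hc : StrongConn G {c}ᶜ) :
    IsMaxPSSg G {c}ᶜ := by
  refine ⟨nonempty_compl.2 (singleton_ne_univ c),
    ssubset_univ_iff.2 (compl_ne_univ.2 (singleton_nonempty c)), hc, fun Z _ hZu _ hcZ => ?_⟩
  refine (subset_compl_singleton_iff.2 fun hc => hZu.2 fun y _ => ?_).antisymm hcZ
  by_cases hy : y = c
  exacts [hy ▸ hc, hcZ hy]

lemma IsMaxPSSg.eq_compl_singleton [Nontrivial V] {c : V} (hX : IsMaxPSSg G X)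
    (hc : StrongConn G {c}ᶜ) (hcX : c ∉ X) : X = {c}ᶜ :=
  have hc' := isMaxPSSg_compl_singleton hc
  (hX.2.2.2 {c}ᶜ hc'.1 hc'.2.1 hc (subset_compl_singleton_iff.2 hcX)).symm

lemma MaxPSSDisjG.exists_not_adj [Fintype V] (hdisj : MaxPSSDisjG G)
    (hcard : 3 ≤ Fintype.card V) : ∃ a b, a ≠ b ∧ ¬ G a b := by
  have : Nontrivial V := Fintype.one_lt_card_iff_nontrivial.1 (by omega)
  by_contra! hG
  have hmax (c : V) : IsMaxPSSg G {c}ᶜ := isMaxPSSg_compl_singleton fun s hs t ht => by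
    by_cases hst : s = t
    exacts [hst ▸ .refl, .single ⟨hG s t hst, hs, ht⟩]
  obtain ⟨x, y, hxy⟩ := exists_pair_ne V
  obtain ⟨z, hzx, hzy⟩ := ENat.exists_ne_ne_of_three_le (by simpa using hcard) x y
  have hxy' : ({x}ᶜ : Set V) ≠ {y}ᶜ := by simpa using hxy
  exact (hdisj _ _ (hmax x) (hmax y) hxy').subset ⟨hzx, hzy⟩

end MaxPSS

section MinRS

variable {G : V → V → Prop} {Y : Set V}

lemma IsMinRSg.isMaxPSSg_compl (hY : IsMinRSg G Y) : IsMaxPSSg G Yᶜ := by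
  obtain ⟨⟨hne, hss, hsc⟩, hmin⟩ := hY
  refine ⟨nonempty_compl.2 hss.ne, ssubset_univ_iff.2 (compl_ne_univ.2 hne),
    by rwa [compl_eq_univ_sdiff], fun Z hZ hZu hZsc hYZ => ?_⟩
  have hRS : IsRSg G Zᶜ := ⟨nonempty_compl.2 hZu.ne, ssubset_univ_iff.2 (compl_ne_univ.2 hZ),
    by rwa [← compl_eq_univ_sdiff, compl_compl]⟩
  rw [← hmin Zᶜ hRS (compl_subset_comm.1 hYZ), compl_compl]

lemma minRSDisjG_of_strongConn_compl_singleton [Nontrivial V] {c : V}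
    (hc : StrongConn G {c}ᶜ) : MinRSDisjG G := by
  have hcover (X X' : Set V) (hX : IsMaxPSSg G X) (hX' : IsMaxPSSg G X') (hne : X ≠ X')
      (hcX : c ∉ X) : X ∪ X' = univ := by
    have hXc := hX.eq_compl_singleton hc hcX
    have hcX' : c ∈ X' := by_contra fun h => hne (hXc.trans (hX'.eq_compl_singleton hc h).symm)
    refine eq_univ_of_forall fun v => ?_
    by_cases hv : v = c
    exacts [Or.inr (hv ▸ hcX'), Or.inl (hXc ▸ hv)]
  intro Y Y' hY hY' hne
  have hX := hY.isMaxPSSg_compl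
  have hX' := hY'.isMaxPSSg_compl
  have hne' : Yᶜ ≠ Y'ᶜ := compl_injective.ne hne
  have hU : Yᶜ ∪ Y'ᶜ = univ := by
    by_cases hcY : c ∈ Yᶜ
    · by_cases hcY' : c ∈ Y'ᶜ
      · exact hX.union_eq_univ hX' hne' ⟨c, hcY, hcY'⟩
      · rw [union_comm]
        exact hcover _ _ hX' hX hne'.symm hcY'
    · exact hcover _ _ hX hX' hne' hcY
  rwa [← compl_inter, compl_univ_iff] at hU

end MinRS

lemma IsMaxPSSg.exists_strongConn_addArc {G : V → V → Prop} {X : Set V}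
    (hG : StrongConn G univ) (hX : IsMaxPSSg G X) :
    ∃ c a b, StrongConn (addArc G a b) {c}ᶜ := by
  obtain ⟨x, hx⟩ := hX.1
  obtain ⟨y, -, hy⟩ := exists_of_ssubset hX.2.1
  have hpath (s t : V) : ReflTransGen G s t :=
    ReflTransGen.mono (fun _ _ h => h.1) _ _ (hG s (mem_univ s) t (mem_univ t))
  obtain ⟨u, hu, q, hq, huq, -⟩ := (hpath x y).exists_last_exit hx hy
  have hxq : x ∉ ({q} : Set V) := fun h => hq (h ▸ hx)
  obtain ⟨q', hq', b, -, hqb, hbx⟩ := (hpath q x).exists_last_exit (mem_singleton q) hxq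
  rw [mem_singleton_iff.1 hq'] at hqb
  set I := {z | ReachIn (addArc G u b) {q}ᶜ b z ∧ ReachIn (addArc G u b) {q}ᶜ z x}
  have hbx' : ReachIn (addArc G u b) {q}ᶜ b x := hbx.mono_rel fun _ _ => Or.inl
  have hT : StrongConn (addArc G u b) (X ∪ I) :=
    (hX.2.2.1.mono_rel fun _ _ => Or.inl).union_ear hx hu (Or.inr ⟨rfl, rfl⟩) hbx'
  have hS : StrongConn G (insert q (X ∪ I)) := by
    refine strongConn_insert (fun s hs t ht => (hT s hs t ht).lift fun v hv w hw hvw => ?_)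
      (Or.inl hu) (Or.inr ⟨.refl, hbx'⟩) huq hqb
    rcases hvw with hvw | ⟨rfl, rfl⟩
    · exact .single ⟨hvw, mem_insert_of_mem q hv, mem_insert_of_mem q hw⟩
    · exact .head ⟨huq, mem_insert_of_mem q hv, mem_insert q _⟩
        (.single ⟨hqb, mem_insert q _, mem_insert_of_mem q hw⟩)
  have hU : insert q (X ∪ I) = univ := by
    by_contra hne
    exact hq (hX.2.2.2 _ (insert_nonempty q _) (ssubset_univ_iff.2 hne) hS
      (subset_union_left.trans (subset_insert q _)) ▸ mem_insert q _)
  have hXI : X ∪ I = {q}ᶜ := by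
    refine ext fun z => ⟨?_, fun hz => ?_⟩
    · rintro (hz | hz) rfl
      exacts [hq hz, hz.2.mem_of_mem_right hxq rfl]
    · have hzU : z ∈ insert q (X ∪ I) := hU ▸ mem_univ z
      exact hzU.resolve_left hz
  exact ⟨q, u, b, hXI ▸ hT⟩

theorem stmt_18 [Fintype V] (G : V → V → Prop)
    (hSC : StrongConn G Set.univ) (hcard : 3 ≤ Fintype.card V)
    (hdisj : MaxPSSDisjG G) :
    ∃ a b : V, a ≠ b ∧ ¬ G a b ∧
      MinRSDisjG (fun x y => G x y ∨ (x = a ∧ y = b)) := by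
  have : Nontrivial V := Fintype.one_lt_card_iff_nontrivial.1 (by omega)
  obtain ⟨X, hX⟩ := exists_isMaxPSSg G
  obtain ⟨c, a, b, hc⟩ := hX.exists_strongConn_addArc hSC
  by_cases hab : a ≠ b ∧ ¬ G a b
  · exact ⟨a, b, hab.1, hab.2, minRSDisjG_of_strongConn_compl_singleton hc⟩
  · have hcG : StrongConn G {c}ᶜ := hc.of_addArc (by tauto)
    obtain ⟨a', b', hab', hGab'⟩ := hdisj.exists_not_adj hcard
    exact ⟨a', b', hab', hGab',
      minRSDisjG_of_strongConn_compl_singleton (hcG.mono_rel fun _ _ => Or.inl)⟩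
end
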